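/- arXiv:0912.1578 — 2 statements merged into one kernel-verified Lean document; each statement's English description precedes it below -/
import Mathlib

section
/- Let d_1,…,d_n and m_1,…,m_n be positive integers with m_i ≡ d_{ρ(i)} mod d for some permutation ρ and some positive integer d, and suppose Π_i [m_i]_q/[d_i]_q is a polynomial in q with integer coefficients. Then the evaluation of Π_i [m_i]_q/[d_i]_q at q = ζ, where ζ is a primitive d-th root of unity, equals Π_{i : d | d_i} (m_{ρ^{-1}(i)}/d_i) whenever d | d_i ⟺ d | m_{ρ^{-1}(i)}, and in particular is a positive rational number. -/
open Finset

/-- The q-integer `[i]_q = 1 + q + ⋯ + q^{i-1}` as a polynomial over `ℚ`. -/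
noncomputable def qIntP (i : ℕ) : Polynomial ℚ := ∑ j ∈ Finset.range i, Polynomial.X ^ j

lemma qIntP_eval_one (m : ℕ) : Polynomial.eval 1 (qIntP m) = m := by
  simp [qIntP, Polynomial.eval_finset_sum]

lemma qIntP_ne_zero {m : ℕ} (hm : 0 < m) : qIntP m ≠ 0 := by
  intro h
  have h2 : ((m : ℚ)) = 0 := by rw [← qIntP_eval_one m, h, Polynomial.eval_zero]
  have h3 : m = 0 := by exact_mod_cast h2
  omega

lemma qIntP_split {d m : ℕ} (h : d ∣ m) :
    qIntP m = qIntP d * ∑ j ∈ Finset.range (m / d), (Polynomial.X ^ d) ^ j := by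
  have hX : (Polynomial.X - 1 : Polynomial ℚ) ≠ 0 := by
    have := Polynomial.X_sub_C_ne_zero (1 : ℚ)
    simpa using this
  apply mul_right_cancel₀ hX
  have h1 : (qIntP d * ∑ j ∈ Finset.range (m / d), (Polynomial.X ^ d) ^ j)
        * (Polynomial.X - 1)
      = (∑ j ∈ Finset.range (m / d), (Polynomial.X ^ d) ^ j)
        * (qIntP d * (Polynomial.X - 1)) := by ring
  rw [h1]
  simp only [qIntP]
  rw [geom_sum_mul, geom_sum_mul, geom_sum_mul, ← pow_mul, Nat.mul_div_cancel' h]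

lemma aeval_qIntP (z : ℂ) (m : ℕ) :
    Polynomial.aeval z (qIntP m) = ∑ j ∈ Finset.range m, z ^ j := by
  simp [qIntP]

lemma pow_mod_eq {ζ : ℂ} {d : ℕ} (h1 : ζ ^ d = 1) (m : ℕ) : ζ ^ m = ζ ^ (m % d) := by
  conv_lhs => rw [← Nat.div_add_mod m d]
  rw [pow_add, pow_mul, h1, one_pow, one_mul]

lemma one_lt_of_not_dvd {d m : ℕ} (hd : 0 < d) (hm : ¬ d ∣ m) : 1 < d := by
  by_contra h
  have hde : d = 1 := by omega
  exact hm (hde ▸ one_dvd m)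

lemma aeval_qIntP_modEq {ζ : ℂ} {d : ℕ} (hd : 0 < d) (hζ : IsPrimitiveRoot ζ d)
    {m m' : ℕ} (h : m ≡ m' [MOD d]) (hm : ¬ d ∣ m) :
    Polynomial.aeval ζ (qIntP m) = Polynomial.aeval ζ (qIntP m') := by
  have hd1 : 1 < d := one_lt_of_not_dvd hd hm
  have hz : ζ - 1 ≠ 0 := sub_ne_zero.mpr (hζ.ne_one hd1)
  apply mul_right_cancel₀ hz
  have h' : m % d = m' % d := h
  rw [aeval_qIntP, aeval_qIntP, geom_sum_mul, geom_sum_mul,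
      pow_mod_eq hζ.pow_eq_one m, pow_mod_eq hζ.pow_eq_one m', h']

lemma aeval_qIntP_ne_zero {ζ : ℂ} {d : ℕ} (hd : 0 < d) (hζ : IsPrimitiveRoot ζ d)
    {m : ℕ} (hm : ¬ d ∣ m) : Polynomial.aeval ζ (qIntP m) ≠ 0 := by
  have hd1 : 1 < d := one_lt_of_not_dvd hd hm
  intro h0
  have key : ζ ^ m - 1 = 0 := by
    rw [← geom_sum_mul, ← aeval_qIntP, h0, zero_mul]
  have hone : ζ ^ (m % d) = 1 := by
    rw [← pow_mod_eq hζ.pow_eq_one m]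
    exact sub_eq_zero.mp key
  have hpos : 0 < m % d := Nat.pos_of_ne_zero (fun h => hm (Nat.dvd_of_mod_eq_zero h))
  exact hζ.pow_ne_one_of_pos_of_lt hpos.ne' (Nat.mod_lt _ hd) hone

lemma aeval_geom_pow {ζ : ℂ} {d : ℕ} (h1 : ζ ^ d = 1) (k : ℕ) :
    Polynomial.aeval ζ (∑ j ∈ Finset.range k, (Polynomial.X ^ d : Polynomial ℚ) ^ j) = k := by
  simp [h1]

/-- Let `d_1,…,d_n` and `m_1,…,m_n` be positive integers with `m_i ≡ d_{ρ(i)} mod d` for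
a permutation `ρ`, and suppose `∏_i [m_i]_q/[d_i]_q` equals a polynomial `P`.  Then the
evaluation of `P` at a primitive `d`-th root of unity `ζ` equals
`∏_{i : d ∣ d_i} m_{ρ⁻¹(i)}/d_i`, and in particular is a positive rational number. -/
theorem q_catalan_root_of_unity_evaluation
    (n d : ℕ) (hd : 0 < d) (ζ : ℂ) (hζ : IsPrimitiveRoot ζ d)
    (dv mv : Fin n → ℕ) (hdpos : ∀ i, 0 < dv i) (hmpos : ∀ i, 0 < mv i)
    (ρ : Equiv.Perm (Fin n))
    (hcong : ∀ i, mv i ≡ dv (ρ i) [MOD d])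
    (P : Polynomial ℚ)
    (hP : P * ∏ i : Fin n, qIntP (dv i) = ∏ i : Fin n, qIntP (mv i)) :
    Polynomial.aeval ζ P
        = ∏ i ∈ Finset.univ.filter (fun i : Fin n => d ∣ dv i),
            ((mv (ρ.symm i) : ℂ) / (dv i : ℂ)) ∧
      ∃ r : ℚ, 0 < r ∧ Polynomial.aeval ζ P = (r : ℂ) := by
  classical
  have hdC : (d : ℂ) ≠ 0 := Nat.cast_ne_zero.mpr hd.ne'
  have hdvd : ∀ i, (d ∣ mv i ↔ d ∣ dv (ρ i)) := by
    intro i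
    have hc : mv i % d = dv (ρ i) % d := hcong i
    rw [Nat.dvd_iff_mod_eq_zero, Nat.dvd_iff_mod_eq_zero, hc]
  set S : Finset (Fin n) := univ.filter (fun i => d ∣ dv i) with hS
  set Sc : Finset (Fin n) := univ.filter (fun i => ¬ d ∣ dv i) with hSc
  have hmapS : univ.filter (fun i => d ∣ mv i) = S.map ρ.symm.toEmbedding := by
    ext j
    simp only [hS, mem_filter, mem_univ, true_and, Finset.mem_map,
      Equiv.coe_toEmbedding]
    constructor
    · intro hj; exact ⟨ρ j, (hdvd j).mp hj, ρ.symm_apply_apply j⟩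
    · rintro ⟨a, ha, rfl⟩
      exact (hdvd _).mpr (by simpa using ha)
  have hmapSc : univ.filter (fun i => ¬ d ∣ mv i) = Sc.map ρ.symm.toEmbedding := by
    ext j
    simp only [hSc, mem_filter, mem_univ, true_and, Finset.mem_map,
      Equiv.coe_toEmbedding]
    constructor
    · intro hj; exact ⟨ρ j, fun h => hj ((hdvd j).mpr h), ρ.symm_apply_apply j⟩
    · rintro ⟨a, ha, rfl⟩
      intro h
      exact ha (by simpa using (hdvd _).mp h)
  have hdvdS : ∀ i ∈ S, d ∣ dv i := fun i hi => (mem_filter.mp hi).2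
  have hdvdSm : ∀ i ∈ S, d ∣ mv (ρ.symm i) := by
    intro i hi
    refine (hdvd _).mpr ?_
    simpa using hdvdS i hi
  have hsplitD : ∏ i : Fin n, qIntP (dv i)
      = (qIntP d ^ S.card * ∏ i ∈ S, ∑ j ∈ Finset.range (dv i / d), (Polynomial.X ^ d) ^ j)
        * ∏ i ∈ Sc, qIntP (dv i) := by
    rw [← Finset.prod_filter_mul_prod_filter_not univ (fun i => d ∣ dv i)]
    congr 1
    rw [Finset.prod_congr rfl (fun i hi => qIntP_split (hdvdS i hi)),
        Finset.prod_mul_distrib, Finset.prod_const]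
  have hsplitM : ∏ i : Fin n, qIntP (mv i)
      = (qIntP d ^ S.card
          * ∏ i ∈ S, ∑ j ∈ Finset.range (mv (ρ.symm i) / d), (Polynomial.X ^ d) ^ j)
        * ∏ i ∈ Sc, qIntP (mv (ρ.symm i)) := by
    rw [← Finset.prod_filter_mul_prod_filter_not univ (fun i => d ∣ mv i), hmapS, hmapSc,
        Finset.prod_map, Finset.prod_map]
    simp only [Equiv.coe_toEmbedding]
    congr 1
    rw [Finset.prod_congr rfl (fun i hi => qIntP_split (hdvdSm i hi)),
        Finset.prod_mul_distrib, Finset.prod_const]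
  have hQne : qIntP d ^ S.card ≠ 0 := pow_ne_zero _ (qIntP_ne_zero hd)
  have hcancel : P * ((∏ i ∈ S, ∑ j ∈ Finset.range (dv i / d), (Polynomial.X ^ d) ^ j)
        * ∏ i ∈ Sc, qIntP (dv i))
      = (∏ i ∈ S, ∑ j ∈ Finset.range (mv (ρ.symm i) / d), (Polynomial.X ^ d) ^ j)
        * ∏ i ∈ Sc, qIntP (mv (ρ.symm i)) := by
    apply mul_left_cancel₀ hQne
    have hP' := hP
    rw [hsplitD, hsplitM] at hP'
    linear_combination hP'
  have heval := congrArg (Polynomial.aeval ζ) hcancel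
  simp only [map_mul, map_prod] at heval
  have hA1 : ∏ i ∈ S, Polynomial.aeval ζ
        (∑ j ∈ Finset.range (dv i / d), (Polynomial.X ^ d : Polynomial ℚ) ^ j)
      = ∏ i ∈ S, ((dv i / d : ℕ) : ℂ) :=
    Finset.prod_congr rfl fun i _ => aeval_geom_pow hζ.pow_eq_one _
  have hB1 : ∏ i ∈ S, Polynomial.aeval ζ
        (∑ j ∈ Finset.range (mv (ρ.symm i) / d), (Polynomial.X ^ d : Polynomial ℚ) ^ j)
      = ∏ i ∈ S, ((mv (ρ.symm i) / d : ℕ) : ℂ) :=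
    Finset.prod_congr rfl fun i _ => aeval_geom_pow hζ.pow_eq_one _
  have hnotm : ∀ i ∈ Sc, ¬ d ∣ mv (ρ.symm i) := by
    intro i hi h
    exact (mem_filter.mp hi).2 (by simpa using (hdvd (ρ.symm i)).mp h)
  have hB2 : ∏ i ∈ Sc, Polynomial.aeval ζ (qIntP (mv (ρ.symm i)))
      = ∏ i ∈ Sc, Polynomial.aeval ζ (qIntP (dv i)) := by
    refine Finset.prod_congr rfl fun i hi => ?_
    exact aeval_qIntP_modEq hd hζ
      (show mv (ρ.symm i) ≡ dv i [MOD d] by simpa using hcong (ρ.symm i)) (hnotm i hi)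
  rw [hA1, hB1, hB2] at heval
  have hA2ne : ∏ i ∈ Sc, Polynomial.aeval ζ (qIntP (dv i)) ≠ 0 :=
    Finset.prod_ne_zero_iff.mpr fun i hi => aeval_qIntP_ne_zero hd hζ (mem_filter.mp hi).2
  have hkey : Polynomial.aeval ζ P * ∏ i ∈ S, ((dv i / d : ℕ) : ℂ)
      = ∏ i ∈ S, ((mv (ρ.symm i) / d : ℕ) : ℂ) := by
    apply mul_right_cancel₀ hA2ne
    linear_combination heval
  have hcne : ∏ i ∈ S, ((dv i / d : ℕ) : ℂ) ≠ 0 :=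
    Finset.prod_ne_zero_iff.mpr (fun i hi => by
      have h0 : 0 < dv i / d := Nat.div_pos (Nat.le_of_dvd (hdpos i) (hdvdS i hi)) hd
      exact_mod_cast h0.ne')
  have hmain : Polynomial.aeval ζ P = ∏ i ∈ S, ((mv (ρ.symm i) : ℂ) / (dv i : ℂ)) := by
    have h1 : Polynomial.aeval ζ P
        = (∏ i ∈ S, ((mv (ρ.symm i) / d : ℕ) : ℂ)) / ∏ i ∈ S, ((dv i / d : ℕ) : ℂ) :=
      (eq_div_iff hcne).mpr hkey
    rw [h1, ← Finset.prod_div_distrib]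
    refine Finset.prod_congr rfl fun i hi => ?_
    have hdvC : (dv i : ℂ) ≠ 0 := Nat.cast_ne_zero.mpr (hdpos i).ne'
    rw [Nat.cast_div (hdvdSm i hi) hdC, Nat.cast_div (hdvdS i hi) hdC]
    field_simp
  refine ⟨hmain, ⟨∏ i ∈ S, ((mv (ρ.symm i) : ℚ) / (dv i : ℚ)), ?_, ?_⟩⟩
  · exact Finset.prod_pos fun i hi =>
      div_pos (by exact_mod_cast hmpos _) (by exact_mod_cast hdpos i)
  · rw [hmain]
    push_cast
    rfl
end

section
/- For the dihedral group of order 2k (Coxeter group I_2(k)) with degrees 2 and k and Coxeter number h = k, the q-Fuss-Catalan number C^{(m)}(q) = [mk+2]_q[mk+k]_q/([2]_q[k]_q) is a polynomial in q with nonnegative integer coefficients for every positive integer m. -/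
open Finset

/-- The q-integer `[i]_q = 1 + q + ⋯ + q^{i-1}` as a polynomial over `ℤ`. -/
noncomputable def qIntZ (i : ℕ) : Polynomial ℤ := ∑ j ∈ Finset.range i, Polynomial.X ^ j

lemma qIntZ_add (a b : ℕ) :
    qIntZ (a + b) = qIntZ a + Polynomial.X ^ a * qIntZ b := by
  simp only [qIntZ, Finset.sum_range_add, Finset.mul_sum, pow_add]

lemma qIntZ_mul (a b : ℕ) :
    qIntZ (a * b) = qIntZ a * ∑ i ∈ Finset.range b, Polynomial.X ^ (a * i) := by
  induction b with
  | zero => simp [qIntZ]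
  | succ n ih =>
      rw [Nat.mul_succ, qIntZ_add, ih, Finset.sum_range_succ, mul_add]
      ring

lemma geom_two (c s : ℕ) :
    ∑ i ∈ Finset.range (2 * s), (Polynomial.X : Polynomial ℤ) ^ (c * i)
      = (1 + Polynomial.X ^ c) * ∑ i ∈ Finset.range s, Polynomial.X ^ (2 * c * i) := by
  induction s with
  | zero => simp
  | succ n ih =>
      rw [Nat.mul_succ, Finset.sum_range_add, ih, Finset.sum_range_succ]
      simp only [Finset.sum_range_succ, Finset.sum_range_zero]
      rw [show c * (2 * n + 0) = 2 * c * n by ring,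
        show c * (2 * n + 1) = 2 * c * n + c by ring, pow_add]
      ring

lemma map_sum_pow (s : ℕ) (f : ℕ → ℕ) :
    (∑ i ∈ Finset.range s, (Polynomial.X : Polynomial ℕ) ^ (f i)).map (Nat.castRingHom ℤ)
      = ∑ i ∈ Finset.range s, (Polynomial.X : Polynomial ℤ) ^ (f i) := by
  simp [Polynomial.map_sum]

lemma qIntZ_one : qIntZ 1 = 1 := by simp [qIntZ]

lemma qIntZ_two : qIntZ 2 = 1 + Polynomial.X := by
  simp [qIntZ, Finset.sum_range_succ]

/-- For the dihedral group `I_2(k)` (degrees `2` and `k`, Coxeter number `h = k`),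
the q-Fuss-Catalan number `C^{(m)}(q) = [mk+2]_q[mk+k]_q/([2]_q[k]_q)` is a polynomial
in `q` with nonnegative integer coefficients, for every positive integer `m`. -/
theorem dihedral_q_fuss_catalan (k m : ℕ) (hk : 2 ≤ k) (hm : 0 < m) :
    ∃ C : Polynomial ℕ,
      qIntZ (m * k + 2) * qIntZ (m * k + k)
        = C.map (Nat.castRingHom ℤ) * (qIntZ 2 * qIntZ k) := by
  have hmk : m * k + k = k * (m + 1) := by ring
  rcases Nat.even_or_odd (m * k) with he | ho
  · -- even case
    obtain ⟨t, ht⟩ := he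
    have h2 : m * k + 2 = 2 * (t + 1) := by omega
    refine ⟨(∑ i ∈ Finset.range (t + 1), Polynomial.X ^ (2 * i))
        * (∑ i ∈ Finset.range (m + 1), Polynomial.X ^ (k * i)), ?_⟩
    rw [h2, hmk, qIntZ_mul, qIntZ_mul, Polynomial.map_mul, map_sum_pow, map_sum_pow]
    ring
  · -- odd case: k and m are both odd
    rw [Nat.odd_mul] at ho
    obtain ⟨u, hu⟩ := ho.2
    obtain ⟨v, hv⟩ := ho.1
    obtain ⟨s, hs⟩ : ∃ s, m + 1 = 2 * s := ⟨v + 1, by omega⟩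
    set n := m * k + 2 with hn
    have hkn : k ≤ n := by
      have : k ≤ m * k := Nat.le_mul_of_pos_left k hm
      omega
    -- the nonnegative quotient Q
    refine ⟨((∑ i ∈ Finset.range (u + 1), Polynomial.X ^ (2 * i))
          + Polynomial.X ^ k * (∑ j ∈ Finset.range (n - k), Polynomial.X ^ j)
          + Polynomial.X ^ (n + 1) * (∑ i ∈ Finset.range u, Polynomial.X ^ (2 * i)))
        * (∑ i ∈ Finset.range s, Polynomial.X ^ (2 * k * i)), ?_⟩
    -- abbreviations over ℤ
    set A : Polynomial ℤ := ∑ i ∈ Finset.range (u + 1), Polynomial.X ^ (2 * i) with hA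
    set B : Polynomial ℤ := ∑ j ∈ Finset.range (n - k), (Polynomial.X : Polynomial ℤ) ^ j with hB
    set D : Polynomial ℤ := ∑ i ∈ Finset.range u, Polynomial.X ^ (2 * i) with hD
    set T : Polynomial ℤ := ∑ i ∈ Finset.range s, Polynomial.X ^ (2 * k * i) with hT
    have hmap : (((∑ i ∈ Finset.range (u + 1), (Polynomial.X : Polynomial ℕ) ^ (2 * i))
          + Polynomial.X ^ k * (∑ j ∈ Finset.range (n - k), Polynomial.X ^ j)
          + Polynomial.X ^ (n + 1) * (∑ i ∈ Finset.range u, Polynomial.X ^ (2 * i)))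
        * (∑ i ∈ Finset.range s, Polynomial.X ^ (2 * k * i))).map (Nat.castRingHom ℤ)
        = (A + Polynomial.X ^ k * B + Polynomial.X ^ (n + 1) * D) * T := by
      simp [Polynomial.map_sum, hA, hB, hD, hT]
    rw [hmap]
    -- key identity: (1 + X) * Q₀ = (1 + X^k) * qIntZ n
    have h2A : qIntZ 2 * A = qIntZ (k + 1) := by
      have : k + 1 = 2 * (u + 1) := by omega
      rw [this, qIntZ_mul]
    have h2D : qIntZ 2 * D = qIntZ (k - 1) := by
      have : k - 1 = 2 * u := by omega
      rw [this, qIntZ_mul]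
    have hBq : B = qIntZ (n - k) := rfl
    have hXmul : ∀ a b : ℕ, Polynomial.X ^ a * qIntZ b = qIntZ (a + b) - qIntZ a := by
      intro a b; rw [qIntZ_add]; ring
    have hkey : qIntZ 2 * (A + Polynomial.X ^ k * B + Polynomial.X ^ (n + 1) * D)
        = (1 + Polynomial.X ^ k) * qIntZ n := by
      have e1 : qIntZ 2 * (Polynomial.X ^ k * B)
          = Polynomial.X ^ k * qIntZ (n - k) + Polynomial.X ^ (k + 1) * qIntZ (n - k) := by
        rw [hBq, qIntZ_two, pow_succ]; ring
      have rhs : (1 + Polynomial.X ^ k) * qIntZ n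
          = qIntZ n + (qIntZ (k + n) - qIntZ k) := by
        rw [← hXmul]; ring
      calc qIntZ 2 * (A + Polynomial.X ^ k * B + Polynomial.X ^ (n + 1) * D)
          = qIntZ 2 * A + qIntZ 2 * (Polynomial.X ^ k * B)
            + Polynomial.X ^ (n + 1) * (qIntZ 2 * D) := by ring
        _ = qIntZ (k + 1) + (Polynomial.X ^ k * qIntZ (n - k)
            + Polynomial.X ^ (k + 1) * qIntZ (n - k))
            + Polynomial.X ^ (n + 1) * qIntZ (k - 1) := by rw [h2A, e1, h2D]
        _ = qIntZ (k + 1) + ((qIntZ (k + (n - k)) - qIntZ k)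
            + (qIntZ (k + 1 + (n - k)) - qIntZ (k + 1)))
            + (qIntZ (n + 1 + (k - 1)) - qIntZ (n + 1)) := by
              rw [hXmul, hXmul, hXmul]
        _ = (1 + Polynomial.X ^ k) * qIntZ n := by
              rw [show k + (n - k) = n by omega, show k + 1 + (n - k) = n + 1 by omega,
                show n + 1 + (k - 1) = k + n by omega, rhs]
              ring
    -- decompose qIntZ (m*k + k)
    have hdec : qIntZ (m * k + k)
        = qIntZ k * ((1 + Polynomial.X ^ k) * T) := by
      rw [hmk, qIntZ_mul, hs, geom_two]
    calc qIntZ (m * k + 2) * qIntZ (m * k + k)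
        = qIntZ n * (qIntZ k * ((1 + Polynomial.X ^ k) * T)) := by rw [hdec]
      _ = (qIntZ k * T) * ((1 + Polynomial.X ^ k) * qIntZ n) := by ring
      _ = (qIntZ k * T) * (qIntZ 2 * (A + Polynomial.X ^ k * B + Polynomial.X ^ (n + 1) * D)) := by
          rw [hkey]
      _ = (A + Polynomial.X ^ k * B + Polynomial.X ^ (n + 1) * D) * T * (qIntZ 2 * qIntZ k) := by
          ring
end
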